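/- Fix d ∈ (−1,1), β > 0 and α₁, α₂ > 0. Suppose that α₁·μ(z) − (α₂/α₁)·η(z) > 0 for every z ∈ ℝ²∖{(0,0)}. Then there exists ã > 0 such that for every z = (z₁,z₂) ∈ ℝ²∖{(0,0)}: ã·(α₁·μ(z₁,z₂) − (α₂/α₁)·η(z₁,z₂)) > α₁²·z₂². (That is, the maximum M of m(z) = α₁²z₂²/(α₁μ(z) − (α₂/α₁)η(z)) over the homogeneous unit sphere is finite, and any ã > M works.) -/
import Mathlib


/-- Sign-preserving power `⌊x⌉^p = sign(x)·|x|^p`. -/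
noncomputable def spow (x p : ℝ) : ℝ := Real.sign x * |x| ^ p

/-- `μ(z) = |⌊z₁⌉^{1/(1-d)} - z₂|²`. -/
noncomputable def muF (d z1 z2 : ℝ) : ℝ := |spow z1 (1/(1-d)) - z2| ^ (2:ℝ)

/-- `η(z) = (1+β)(z₁ - ⌊z₂⌉^{1-d})⌊z₁⌉^{(1+d)/(1-d)} - β|z₁|^{2/(1-d)}`. -/
noncomputable def etaF (d β z1 z2 : ℝ) : ℝ :=
  (1 + β) * (z1 - spow z2 (1 - d)) * spow z1 ((1+d)/(1-d)) - β * |z1| ^ (2/(1-d))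


lemma spow_zero (p : ℝ) : spow 0 p = 0 := by simp [spow]

lemma spow_of_pos {x : ℝ} (hx : 0 < x) (p : ℝ) : spow x p = x ^ p := by
  simp [spow, Real.sign_of_pos hx, abs_of_pos hx]

lemma spow_of_neg {x : ℝ} (hx : x < 0) (p : ℝ) : spow x p = -(|x| ^ p) := by
  simp [spow, Real.sign_of_neg hx]

lemma spow_one (x : ℝ) : spow x 1 = x := by
  rcases lt_trichotomy x 0 with h | rfl | h
  · simp [spow_of_neg h, abs_of_neg h]
  · simp [spow_zero]
  · simp [spow_of_pos h]

lemma spow_eq_zero_iff {x p : ℝ} : spow x p = 0 ↔ x = 0 := by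
  constructor
  · intro h
    by_contra hx
    rcases lt_trichotomy x 0 with h1 | rfl | h1
    · rw [spow_of_neg h1] at h
      have : |x| ^ p > 0 := Real.rpow_pos_of_pos (abs_pos.mpr hx) p
      linarith
    · exact hx rfl
    · rw [spow_of_pos h1] at h
      have : x ^ p > 0 := Real.rpow_pos_of_pos h1 p
      linarith
  · rintro rfl; exact spow_zero p

lemma abs_spow {x : ℝ} (hx : x ≠ 0) (p : ℝ) : |spow x p| = |x| ^ p := by
  rcases lt_trichotomy x 0 with h | rfl | h
  · rw [spow_of_neg h, abs_neg, abs_of_nonneg (Real.rpow_nonneg (abs_nonneg x) p)]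
  · exact absurd rfl hx
  · rw [spow_of_pos h, abs_of_pos h, abs_of_nonneg (Real.rpow_nonneg h.le p)]

lemma spow_spow (x p q : ℝ) : spow (spow x p) q = spow x (p * q) := by
  rcases lt_trichotomy x 0 with h | rfl | h
  · have h1 : spow x p < 0 := by
      rw [spow_of_neg h]
      exact neg_neg_iff_pos.mpr (Real.rpow_pos_of_pos (abs_pos.mpr h.ne) p)
    rw [spow_of_neg h1, abs_spow h.ne, spow_of_neg h, ← Real.rpow_mul (abs_nonneg x)]
  · simp [spow_zero]
  · have h1 : 0 < spow x p := by rw [spow_of_pos h]; exact Real.rpow_pos_of_pos h p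
    rw [spow_of_pos h1, spow_of_pos h, spow_of_pos h, ← Real.rpow_mul h.le]

lemma spow_mul_left {l : ℝ} (hl : 0 < l) (x p : ℝ) :
    spow (l * x) p = l ^ p * spow x p := by
  rcases lt_trichotomy x 0 with h | rfl | h
  · have h1 : l * x < 0 := mul_neg_of_pos_of_neg hl h
    rw [spow_of_neg h1, spow_of_neg h, abs_mul, abs_of_pos hl,
      Real.mul_rpow hl.le (abs_nonneg x)]
    ring
  · simp [spow_zero]
  · have h1 : 0 < l * x := mul_pos hl h
    rw [spow_of_pos h1, spow_of_pos h, Real.mul_rpow hl.le h.le]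

lemma spow_continuous {p : ℝ} (hp : 0 < p) : Continuous fun x => spow x p := by
  have habs : Continuous fun x : ℝ => |x| ^ p :=
    continuous_abs.rpow_const (fun x => Or.inr hp.le)
  rw [continuous_iff_continuousAt]
  intro a
  rcases lt_trichotomy a 0 with ha | rfl | ha
  · refine (habs.neg.continuousAt).congr ?_
    filter_upwards [Iio_mem_nhds ha] with x hx
    exact (spow_of_neg hx p).symm
  · have h0 : Filter.Tendsto (fun x => spow x p) (nhds 0) (nhds 0) := by
      apply squeeze_zero_norm (a := fun x : ℝ => |x| ^ p)
      · intro x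
        rcases eq_or_ne x 0 with rfl | hx
        · simp [spow_zero, Real.rpow_nonneg]
        · rw [Real.norm_eq_abs, abs_spow hx]
      · have := habs.tendsto 0
        simpa [Real.zero_rpow hp.ne'] using this
    simpa [ContinuousAt, spow_zero] using h0
  · refine habs.continuousAt.congr ?_
    filter_upwards [Ioi_mem_nhds ha] with x hx
    rw [spow_of_pos hx, abs_of_pos hx]


lemma muF_subst {d : ℝ} (hd2 : d < 1) (u1 u2 : ℝ) :
    muF d (spow u1 (1-d)) u2 = (u1 - u2) ^ 2 := by
  have h : (1:ℝ) - d ≠ 0 := by linarith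
  rw [muF, spow_spow, mul_one_div, div_self h, spow_one,
    show (2:ℝ) = ((2:ℕ):ℝ) by norm_num, Real.rpow_natCast, sq_abs]

lemma etaF_subst {d : ℝ} (hd2 : d < 1) (β u1 u2 : ℝ) :
    etaF d β (spow u1 (1-d)) u2 =
      (1 + β) * (spow u1 (1-d) - spow u2 (1-d)) * spow u1 (1+d) - β * u1 ^ 2 := by
  have h : (1:ℝ) - d ≠ 0 := by linarith
  have h1 : (1-d) * ((1+d)/(1-d)) = 1 + d := by field_simp
  have h2 : |spow u1 (1-d)| ^ (2/(1-d)) = u1 ^ 2 := by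
    rcases eq_or_ne u1 0 with rfl | hu
    · rw [spow_zero, abs_zero, Real.zero_rpow (by positivity)]
      ring
    · rw [abs_spow hu, ← Real.rpow_mul (abs_nonneg u1),
        show (1-d) * (2/(1-d)) = 2 by field_simp,
        show (2:ℝ) = ((2:ℕ):ℝ) by norm_num, Real.rpow_natCast, sq_abs]
  rw [etaF, spow_spow, h1, h2]

/-- If `α₁ μ(z) - (α₂/α₁) η(z) > 0` for all `z ≠ 0`, then there exists `ã > 0` with
`ã (α₁ μ(z) - (α₂/α₁) η(z)) > α₁² z₂²` for all `z ≠ 0`. -/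
theorem stmt10 (d β α1 α2 : ℝ) (hd : d ∈ Set.Ioo (-1:ℝ) 1) (hβ : 0 < β)
    (hα1 : 0 < α1) (hα2 : 0 < α2)
    (hpos : ∀ z1 z2 : ℝ, (z1, z2) ≠ ((0:ℝ), (0:ℝ)) →
      0 < α1 * muF d z1 z2 - (α2 / α1) * etaF d β z1 z2) :
    ∃ a : ℝ, 0 < a ∧ ∀ z1 z2 : ℝ, (z1, z2) ≠ ((0:ℝ), (0:ℝ)) →
      α1 ^ 2 * z2 ^ 2 < a * (α1 * muF d z1 z2 - (α2 / α1) * etaF d β z1 z2) := by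
  obtain ⟨hd1, hd2⟩ := hd
  have h1d : (0:ℝ) < 1 - d := by linarith
  have h1d' : (0:ℝ) < 1 + d := by linarith
  set F : ℝ × ℝ → ℝ := fun u =>
    α1 * (u.1 - u.2) ^ 2 - (α2 / α1) *
      ((1 + β) * (spow u.1 (1-d) - spow u.2 (1-d)) * spow u.1 (1+d) - β * u.1 ^ 2)
    with hFdef
  have hFeq : ∀ u1 u2 : ℝ, F (u1, u2) =
      α1 * muF d (spow u1 (1-d)) u2 - (α2 / α1) * etaF d β (spow u1 (1-d)) u2 := by
    intro u1 u2
    rw [muF_subst hd2, etaF_subst hd2]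
  have hFpos : ∀ u : ℝ × ℝ, u ≠ 0 → 0 < F u := by
    intro u hu
    have := hFeq u.1 u.2
    rw [Prod.mk.eta] at this
    rw [this]
    apply hpos
    intro hc
    apply hu
    have h1 : spow u.1 (1-d) = 0 := congrArg Prod.fst hc
    have h2 : u.2 = 0 := congrArg Prod.snd hc
    have h1' : u.1 = 0 := spow_eq_zero_iff.mp h1
    exact Prod.ext h1' h2
  have hs : Continuous fun x : ℝ => spow x (1-d) := spow_continuous h1d
  have hs' : Continuous fun x : ℝ => spow x (1+d) := spow_continuous h1d'
  have hF : Continuous F := by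
    apply Continuous.sub
    · exact continuous_const.mul ((continuous_fst.sub continuous_snd).pow 2)
    · apply continuous_const.mul
      apply Continuous.sub
      · exact (continuous_const.mul ((hs.comp continuous_fst).sub
          (hs.comp continuous_snd))).mul (hs'.comp continuous_fst)
      · exact continuous_const.mul (continuous_fst.pow 2)
  have hFhom : ∀ l : ℝ, 0 < l → ∀ u : ℝ × ℝ, F (l • u) = l ^ 2 * F u := by
    intro l hl u
    have e1 : spow (l * u.1) (1-d) = l ^ (1-d) * spow u.1 (1-d) := spow_mul_left hl _ _
    have e2 : spow (l * u.2) (1-d) = l ^ (1-d) * spow u.2 (1-d) := spow_mul_left hl _ _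
    have e3 : spow (l * u.1) (1+d) = l ^ (1+d) * spow u.1 (1+d) := spow_mul_left hl _ _
    have e4 : l ^ (1-d) * l ^ (1+d) = l ^ 2 := by
      rw [← Real.rpow_add hl, show (1-d) + (1+d) = (2:ℝ) by ring,
        show (2:ℝ) = ((2:ℕ):ℝ) by norm_num, Real.rpow_natCast]
    show α1 * (l * u.1 - l * u.2) ^ 2 - (α2 / α1) *
        ((1 + β) * (spow (l * u.1) (1-d) - spow (l * u.2) (1-d)) * spow (l * u.1) (1+d)
          - β * (l * u.1) ^ 2) = l ^ 2 * F u
    rw [e1, e2, e3, hFdef]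
    linear_combination (-(α2 / α1) * (1 + β) *
      (spow u.1 (1-d) - spow u.2 (1-d)) * spow u.1 (1+d)) * e4
  -- compactness
  set S := Metric.sphere (0 : ℝ × ℝ) 1 with hSdef
  have hne : ((1:ℝ), (0:ℝ)) ∈ S := by
    simp [hSdef, Prod.norm_def]
  have hmemne : ∀ u ∈ S, u ≠ 0 := by
    intro u hu h0
    rw [h0] at hu
    simp [hSdef] at hu
  have hρ : ContinuousOn (fun u : ℝ × ℝ => α1 ^ 2 * u.2 ^ 2 / F u) S := by
    apply ContinuousOn.div
    · exact (continuous_const.mul (continuous_snd.pow 2)).continuousOn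
    · exact hF.continuousOn
    · exact fun u hu => (hFpos u (hmemne u hu)).ne'
  obtain ⟨w0, hw0S, hw0max⟩ :=
    (isCompact_sphere (0 : ℝ × ℝ) 1).exists_isMaxOn ⟨_, hne⟩ hρ
  set M := α1 ^ 2 * w0.2 ^ 2 / F w0 with hMdef
  have hM0 : 0 ≤ M := by
    have := hw0max hne
    simpa using this.trans_eq' (by norm_num)
  refine ⟨M + 1, by linarith, ?_⟩
  have key : ∀ u ∈ S, α1 ^ 2 * u.2 ^ 2 < (M + 1) * F u := by
    intro u hu
    have hFu : 0 < F u := hFpos u (hmemne u hu)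
    have h1 : α1 ^ 2 * u.2 ^ 2 / F u ≤ M := hw0max hu
    have h2 : α1 ^ 2 * u.2 ^ 2 ≤ M * F u := (div_le_iff₀ hFu).mp h1
    nlinarith
  intro z1 z2 hz
  set u : ℝ × ℝ := (spow z1 (1/(1-d)), z2) with hudef
  have hz1 : spow u.1 (1-d) = z1 := by
    rw [hudef, spow_spow, show (1/(1-d)) * (1-d) = 1 by field_simp, spow_one]
  have hFz : F u = α1 * muF d z1 z2 - (α2 / α1) * etaF d β z1 z2 := by
    have := hFeq u.1 u.2
    rw [Prod.mk.eta] at this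
    rw [this, hz1]
  have hune : u ≠ 0 := by
    intro hc
    apply hz
    have h1 : spow z1 (1/(1-d)) = 0 := congrArg Prod.fst hc
    have h2 : z2 = 0 := congrArg Prod.snd hc
    exact Prod.ext (spow_eq_zero_iff.mp h1) h2
  have hl : 0 < ‖u‖ := norm_pos_iff.mpr hune
  set l := ‖u‖ with hldef
  set w := l⁻¹ • u with hwdef
  have hwS : w ∈ S := by
    rw [hSdef, mem_sphere_zero_iff_norm, hwdef, norm_smul, norm_inv, norm_norm,
      ← hldef, inv_mul_cancel₀ hl.ne']
  have huw : u = l • w := (smul_inv_smul₀ hl.ne' u).symm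
  have hFu : F u = l ^ 2 * F w := by rw [huw]; exact hFhom l hl w
  have hu2 : u.2 = l * w.2 := by rw [huw]; rfl
  have := key w hwS
  calc α1 ^ 2 * z2 ^ 2 = l ^ 2 * (α1 ^ 2 * w.2 ^ 2) := by
        have : z2 = u.2 := rfl
        rw [this, hu2]; ring
    _ < l ^ 2 * ((M + 1) * F w) := by
        apply mul_lt_mul_of_pos_left (key w hwS) (by positivity)
    _ = (M + 1) * (α1 * muF d z1 z2 - (α2 / α1) * etaF d β z1 z2) := by
        rw [← hFz, hFu]; ring
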